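/- arXiv:2509.14231 — 2 statements merged into one kernel-verified Lean document; each statement's English description precedes it below -/
import Mathlib

section
/- Let k be a field of positive characteristic p, R = k[x_1, x_2, ...]/(x_1^p, x_2^p, ...), and α : R → R the shift homomorphism x_i ↦ x_{i+1}. Then restriction of scalars α_* on the category of locally finite R-modules admits a left adjoint given by extension of scalars M ↦ R ⊗_{α} M, and this extension of scalars functor also preserves locally finite modules. -/
/-! STATEMENT 5: restriction of scalars along the shift `α : R → R`, viewed as a
functor on the category of locally finite `R`-modules, admits a left adjoint given by
extension of scalars `M ↦ R ⊗_α M`, and this extension of scalars functor also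
preserves locally finite modules (i.e. it restricts to the full subcategory of locally
finite modules). -/

open MvPolynomial

/-- The ring `k[x₁, x₂, x₃, ...]/(x₁^p, x₂^p, x₃^p, ...)`. -/
abbrev TruncPoly (k : Type) [Field k] (p : ℕ) : Type :=
  MvPolynomial ℕ k ⧸ Ideal.span (Set.range fun i : ℕ => (X i : MvPolynomial ℕ k) ^ p)

/-- The image of the generator `xᵢ` in `k[x₁, x₂, ...]/(x₁^p, x₂^p, ...)`. -/
noncomputable def xgen (k : Type) [Field k] (p : ℕ) (i : ℕ) : TruncPoly k p :=
  Ideal.Quotient.mk _ (X i)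

/-- An `R`-module is *locally finite* if every element is annihilated by all but
finitely many of the generators `xᵢ`. -/
def IsLocallyFinite (k : Type) [Field k] (p : ℕ) (M : Type)
    [AddCommGroup M] [Module (TruncPoly k p) M] : Prop :=
  ∀ m : M, {i : ℕ | xgen k p i • m ≠ 0}.Finite

open CategoryTheory

/-- The category of locally finite modules over `R = k[x₁, x₂, ...]/(xᵢ^p)`, as a full
subcategory of the category of `R`-modules. -/
abbrev LocFinMod (k : Type) [Field k] (p : ℕ) : Type 1 :=
  CategoryTheory.ObjectProperty.FullSubcategory
    (fun M : ModuleCat.{0} (TruncPoly k p) => IsLocallyFinite k p M.carrier)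

/-! Since `α xᵢ = xᵢ₊₁`, an element of `α_* M` is killed by `xᵢ` as soon as it is killed by
`xᵢ₊₁` in `M`, and a pure tensor `s ⊗ m` of `R ⊗_α M` is killed by `xᵢ₊₁ = α xᵢ` as soon as
`m` is killed by `xᵢ`. So both functors preserve local finiteness, and the
extension–restriction adjunction on all `R`-modules restricts to the full subcategory of
locally finite ones. -/

open scoped ChangeOfRings in
lemma ModuleCat.ExtendScalars.ringHom_smul_tmul {R S : Type} [CommRing R] [CommRing S]
    (f : R →+* S) {M : ModuleCat.{0} R} (r : R) (s : S) (m : M) :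
    HSMul.hSMul (β := (ModuleCat.extendScalars f).obj M) (f r) (s ⊗ₜ[R,f] m) =
      s ⊗ₜ[R,f] (r • m) := by
  let _ : Module R S := Module.compHom S f
  rw [← TensorProduct.smul_tmul]
  exact ModuleCat.ExtendScalars.smul_tmul f (f r) s m

section

variable {k : Type} [Field k] {p : ℕ}

lemma finite_xgen_smul_ne_zero_add {M : Type} [AddCommGroup M] [Module (TruncPoly k p) M]
    {a b : M} (ha : {i | xgen k p i • a ≠ 0}.Finite) (hb : {i | xgen k p i • b ≠ 0}.Finite) :
    {i | xgen k p i • (a + b) ≠ 0}.Finite :=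
  (ha.union hb).subset fun i hi => by
    by_contra h
    simp only [Set.mem_union, Set.mem_ofPred_eq, not_or, not_not] at h
    exact hi (by rw [smul_add, h.1, h.2, add_zero])

lemma isLocallyFinite_restrictScalars_shift (f : TruncPoly k p →+* TruncPoly k p)
    (hf : ∀ i, f (xgen k p i) = xgen k p (i + 1)) {M : ModuleCat.{0} (TruncPoly k p)}
    (hM : IsLocallyFinite k p M) :
    IsLocallyFinite k p ((ModuleCat.restrictScalars f).obj M) := fun m =>
  ((hM m).preimage (add_left_injective 1).injOn).subset fun i hi => by
    rwa [Set.mem_ofPred_eq, ModuleCat.restrictScalars.smul_def, hf] at hi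

lemma isLocallyFinite_extendScalars_shift (f : TruncPoly k p →+* TruncPoly k p)
    (hf : ∀ i, f (xgen k p i) = xgen k p (i + 1)) {M : ModuleCat.{0} (TruncPoly k p)}
    (hM : IsLocallyFinite k p M) :
    IsLocallyFinite k p ((ModuleCat.extendScalars f).obj M) := by
  intro t
  induction t using TensorProduct.induction_on with
  | zero =>
    exact Set.finite_empty.subset fun i hi =>
      hi (smul_zero (A := (ModuleCat.extendScalars f).obj M) _)
  | tmul s m =>
    refine (((hM m).image (· + 1)).insert 0).subset fun i hi => ?_
    obtain _ | j := i
    · exact Set.mem_insert _ _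
    refine Set.mem_insert_of_mem _ ⟨j, fun hj => hi ?_, rfl⟩
    rw [← hf]
    refine (ModuleCat.ExtendScalars.ringHom_smul_tmul f _ s m).trans ?_
    rw [hj]
    exact TensorProduct.tmul_zero _ s
  | add a b ha hb => exact finite_xgen_smul_ne_zero_add ha hb

end

theorem stmt_5_general (k : Type) [Field k] (p : ℕ)
    (α : TruncPoly k p →ₐ[k] TruncPoly k p)
    (hα : ∀ i : ℕ, α (xgen k p i) = xgen k p (i + 1)) :
    ∃ (E Res : LocFinMod k p ⥤ LocFinMod k p),
      (∀ M : LocFinMod k p,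
        Nonempty ((Res.obj M).obj ≅ (ModuleCat.restrictScalars α.toRingHom).obj M.obj)) ∧
      (∀ M : LocFinMod k p,
        Nonempty ((E.obj M).obj ≅ (ModuleCat.extendScalars α.toRingHom).obj M.obj)) ∧
      Nonempty (E ⊣ Res) := by
  let E : LocFinMod k p ⥤ LocFinMod k p :=
    ObjectProperty.lift _ (ObjectProperty.ι _ ⋙ ModuleCat.extendScalars α.toRingHom)
      fun M => isLocallyFinite_extendScalars_shift α.toRingHom hα M.property
  let Res : LocFinMod k p ⥤ LocFinMod k p :=
    ObjectProperty.lift _ (ObjectProperty.ι _ ⋙ ModuleCat.restrictScalars α.toRingHom)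
      fun M => isLocallyFinite_restrictScalars_shift α.toRingHom hα M.property
  refine ⟨E, Res, fun M => ⟨Iso.refl _⟩, fun M => ⟨Iso.refl _⟩, ?_⟩
  exact ⟨(ModuleCat.extendRestrictScalarsAdj α.toRingHom).restrictFullyFaithful
    (ObjectProperty.fullyFaithfulι _) (ObjectProperty.fullyFaithfulι _) (Iso.refl _) (Iso.refl _)⟩

theorem stmt_5 (k : Type) [Field k] (p : ℕ) [hp : Fact p.Prime] [CharP k p]
    (α : TruncPoly k p →ₐ[k] TruncPoly k p)
    (hα : ∀ i : ℕ, α (xgen k p i) = xgen k p (i + 1)) :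
    ∃ (E Res : LocFinMod k p ⥤ LocFinMod k p),
      (∀ M : LocFinMod k p,
        Nonempty ((Res.obj M).obj ≅ (ModuleCat.restrictScalars α.toRingHom).obj M.obj)) ∧
      (∀ M : LocFinMod k p,
        Nonempty ((E.obj M).obj ≅ (ModuleCat.extendScalars α.toRingHom).obj M.obj)) ∧
      Nonempty (E ⊣ Res) :=
  stmt_5_general k p α hα
end

section
/- Let C be a stable category with a t-structure in which products exist and have cohomological amplitude bounded by d (products of connective objects are (-d)-connective). Then for any small family of objects (X_α) and any integer m, the truncation τ_{≤ m} ∏_α X_α is isomorphic to τ_{≤ m} ∏_α τ_{≤ m+d} X_α. -/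
/-!
The fiber of a product of morphisms is the product of their fibers: a diagram chase through the
long exact `Hom(A, -)` sequences of the triangles `Fₐ → Xₐ → Yₐ → Fₐ⟦1⟧` and
`G → ∏ Xₐ → ∏ Yₐ → G⟦1⟧` shows that the maps `G → Fₐ` completing the projections make `G` a
product of the `Fₐ`. Each `Fₐ` is `(m+d+1)`-connective, so the amplitude bound on products makes
`G` `(m+1)`-connective.
-/

open CategoryTheory CategoryTheory.Limits CategoryTheory.Pretriangulated
  CategoryTheory.Triangulated

section

variable {C : Type*} [Category C] [HasZeroObject C] [Preadditive C] [HasShift C ℤ]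
  [∀ n : ℤ, (shiftFunctor C n).Additive] [Pretriangulated C]

lemma exists_shift_eq_comp_of_distTriang {X₁ X₂ X₃ : C} {f₁ : X₁ ⟶ X₂} {f₂ : X₂ ⟶ X₃}
    {f₃ : X₃ ⟶ X₁⟦(1 : ℤ)⟧} (hT : Triangle.mk f₁ f₂ f₃ ∈ distTriang C) {A : C}
    (f : A ⟶ X₁) (hf : f ≫ f₁ = 0) : ∃ g : A⟦(1 : ℤ)⟧ ⟶ X₃, f⟦(1 : ℤ)⟧' = g ≫ f₃ :=
  Triangle.coyoneda_exact₁ _ hT _ (by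
    change _ ≫ f₁⟦(1 : ℤ)⟧' = 0
    rw [← Functor.map_comp, hf, Functor.map_zero])

variable {ι : Type*} {F X Y : ι → C} [HasProduct X] [HasProduct Y]
  {w : ∀ a, F a ⟶ X a} {u : ∀ a, X a ⟶ Y a} {δ : ∀ a, Y a ⟶ (F a)⟦(1 : ℤ)⟧}
  {G : C} {w' : G ⟶ ∏ᶜ X} {δ' : (∏ᶜ Y : C) ⟶ G⟦(1 : ℤ)⟧} {p : ∀ a, G ⟶ F a}

lemma eq_zero_of_forall_comp_eq_zero_of_distTriang_piMap
    (hTa : ∀ a, Triangle.mk (w a) (u a) (δ a) ∈ distTriang C)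
    (hT : Triangle.mk w' (Limits.Pi.map u) δ' ∈ distTriang C)
    (hp₁ : ∀ a, w' ≫ Pi.π X a = p a ≫ w a) (hp₃ : ∀ a, δ' ≫ (p a)⟦(1 : ℤ)⟧' = Pi.π Y a ≫ δ a)
    {A : C} (φ : A ⟶ G) (hφ : ∀ a, φ ≫ p a = 0) : φ = 0 := by
  have hφw' : φ ≫ w' = 0 := Pi.hom_ext _ _ fun a => by
    rw [Category.assoc, hp₁, ← Category.assoc, hφ, zero_comp, zero_comp]
  obtain ⟨g, hg⟩ := exists_shift_eq_comp_of_distTriang hT φ hφw'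
  have hgδ : ∀ a, (g ≫ Pi.π Y a) ≫ δ a = 0 := fun a => by
    rw [Category.assoc, ← hp₃, ← Category.assoc, ← hg, ← Functor.map_comp, hφ, Functor.map_zero]
  have hgu : ∀ a, ∃ s : A⟦(1 : ℤ)⟧ ⟶ X a, g ≫ Pi.π Y a = s ≫ u a := fun a =>
    Triangle.coyoneda_exact₃ _ (hTa a) _ (hgδ a)
  choose s hs using hgu
  have hg_lift : g = Pi.lift s ≫ Limits.Pi.map u := Pi.hom_ext _ _ fun a => by simpa using hs a
  have huδ' : Limits.Pi.map u ≫ δ' = 0 := comp_distTriang_mor_zero₂₃ _ hT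
  have hφ_shift : φ⟦(1 : ℤ)⟧' = 0 := by
    rw [hg, hg_lift, Category.assoc, huδ', comp_zero]
  exact (shiftFunctor C (1 : ℤ)).map_injective (by rw [hφ_shift, Functor.map_zero])

lemma exists_lift_of_distTriang_piMap
    (hTa : ∀ a, Triangle.mk (w a) (u a) (δ a) ∈ distTriang C)
    (hT : Triangle.mk w' (Limits.Pi.map u) δ' ∈ distTriang C)
    (hp₁ : ∀ a, w' ≫ Pi.π X a = p a ≫ w a) (hp₃ : ∀ a, δ' ≫ (p a)⟦(1 : ℤ)⟧' = Pi.π Y a ≫ δ a)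
    {A : C} (f : ∀ a, A ⟶ F a) : ∃ φ : A ⟶ G, ∀ a, φ ≫ p a = f a := by
  have hwu : ∀ a, w a ≫ u a = 0 := fun a => comp_distTriang_mor_zero₁₂ _ (hTa a)
  have hfw : Pi.lift (fun a => f a ≫ w a) ≫ Limits.Pi.map u = 0 := Pi.hom_ext _ _ fun a => by
    simp [hwu]
  obtain ⟨φ₀, hφ₀⟩ : ∃ φ₀ : A ⟶ G, Pi.lift (fun a => f a ≫ w a) = φ₀ ≫ w' :=
    Triangle.coyoneda_exact₂ _ hT _ hfw
  -- `φ₀` is right up to an error `φ₀ ≫ p a - f a` killed by `w a`, which is corrected through `δ'`.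
  have herr : ∀ a, (φ₀ ≫ p a - f a) ≫ w a = 0 := fun a => by
    rw [Preadditive.sub_comp, Category.assoc, ← hp₁, ← Category.assoc, ← hφ₀, limit.lift_π,
      Fan.mk_π_app, sub_self]
  choose e he using fun a => exists_shift_eq_comp_of_distTriang (hTa a) _ (herr a)
  set ψ := (shiftFunctor C (1 : ℤ)).preimage (Pi.lift e ≫ δ')
  have hψ : ∀ a, ψ ≫ p a = φ₀ ≫ p a - f a := fun a =>
    (shiftFunctor C (1 : ℤ)).map_injective <| by
      rw [Functor.map_comp, Functor.map_preimage, Category.assoc, hp₃, ← Category.assoc,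
        limit.lift_π, Fan.mk_π_app, he]
  exact ⟨φ₀ - ψ, fun a => by rw [Preadditive.sub_comp, hψ, sub_sub_cancel]⟩

noncomputable def isLimitFanOfDistTriangPiMap
    (hTa : ∀ a, Triangle.mk (w a) (u a) (δ a) ∈ distTriang C)
    (hT : Triangle.mk w' (Limits.Pi.map u) δ' ∈ distTriang C)
    (hp₁ : ∀ a, w' ≫ Pi.π X a = p a ≫ w a) (hp₃ : ∀ a, δ' ≫ (p a)⟦(1 : ℤ)⟧' = Pi.π Y a ≫ δ a) :
    IsLimit (Fan.mk G p) :=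
  have hlift := fun s : Fan F => exists_lift_of_distTriang_piMap hTa hT hp₁ hp₃ s.proj
  Fan.IsLimit.mk _ (fun s => (hlift s).choose) (fun s => (hlift s).choose_spec)
    fun s φ hφ => sub_eq_zero.mp <|
      eq_zero_of_forall_comp_eq_zero_of_distTriang_piMap hTa hT hp₁ hp₃ _ fun a => by
        rw [Preadditive.sub_comp, (hlift s).choose_spec a]
        exact sub_eq_zero.mpr (hφ a)

end

theorem stmt_10 {C : Type*} [Category C] [HasZeroObject C] [Preadditive C]
    [HasShift C ℤ] [∀ n : ℤ, (shiftFunctor C n).Additive] [Pretriangulated C]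
    (t : TStructure C) (d : ℕ)
    {ι : Type} -- a small family
    (hprod : ∀ (n : ℤ) (Y : ι → C) [HasProduct Y],
      (∀ a, t.IsGE (Y a) n) → t.IsGE (∏ᶜ Y) (n - d))
    (m : ℤ) (X Y : ι → C) [HasProduct X] [HasProduct Y]
    (u : ∀ a, X a ⟶ Y a)
    (hY : ∀ a, t.IsLE (Y a) (m + d))
    (F : ι → C) (w : ∀ a, F a ⟶ X a) (δ : ∀ a, Y a ⟶ (F a)⟦(1 : ℤ)⟧)
    (hTa : ∀ a, Triangle.mk (w a) (u a) (δ a) ∈ distTriang C)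
    (hF : ∀ a, t.IsGE (F a) (m + d + 1))
    (G : C) (w' : G ⟶ ∏ᶜ X) (δ' : (∏ᶜ Y : _) ⟶ G⟦(1 : ℤ)⟧)
    (hT : Triangle.mk w' (Limits.Pi.map u) δ' ∈ distTriang C) :
    t.IsGE G (m + 1) := by
  choose p hp₁ hp₃ using fun a => complete_distinguished_triangle_morphism₁ _ _ hT (hTa a)
    (Pi.π X a) (Pi.π Y a) (Pi.map_π u a)
  have hG := isLimitFanOfDistTriangPiMap hTa hT hp₁ hp₃
  have : HasProduct F := ⟨⟨⟨_, hG⟩⟩⟩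
  have : t.IsGE (∏ᶜ F) (m + 1) := by
    simpa only [add_sub_right_comm _ (1 : ℤ), add_sub_cancel_right] using hprod (m + d + 1) F hF
  exact t.isGE_of_iso (X := ∏ᶜ F) (hG.conePointUniqueUpToIso (productIsProduct F)).symm _
end
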